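/- Context splitting respects environment typing: if U | μ : V : Γ [ro: r, rw: w] and Γ splits into Γ₁ and Γ₂ (shared bindings having shareable types, i.e. kind containing S), then there exist r₁, r₂, w₁, w₂ with r = r₁ ∪ r₂, w = w₁ ∪ w₂, w₁ ∩ w₂ = ∅, such that U | μ : V : Γ₁ [ro: r₁, rw: w₁] and U | μ : V : Γ₂ [ro: r₂, rw: w₂]. -/

import Mathlib

/-- Permissions: Discardable, Shareable, Escapable. -/
inductive Perm | D | S | E
deriving DecidableEq

/-- Kinds are sets of permissions. -/
abbrev Kind := Set Perm

/-- Storage modes. -/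
inductive Mode | readOnly | writable | unboxed

/-- The kind of a mode. -/
def kindOf : Mode → Kind
  | .readOnly => {Perm.D, Perm.S}
  | .writable => {Perm.E}
  | .unboxed  => {Perm.D, Perm.S, Perm.E}

/-- (Closed) types: unit, primitives, and records with possibly-taken fields
    (`true` = taken) and a storage mode. -/
inductive Ty
  | unit
  | prim
  | record (fs : List (Ty × Bool)) (m : Mode)

/-- The kinding judgement for closed types. -/
inductive Kinding : Ty → Kind → Prop
  | unit : Kinding .unit κ
  | prim : Kinding .prim κ
  | record : κ ⊆ kindOf m → (∀ p ∈ fs, p.2 = false → Kinding p.1 κ) →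
      Kinding (.record fs m) κ

abbrev Ptr := ℕ

/-- Update-semantics values: literals, unit, records, and pointers. -/
inductive UVal
  | lit (n : ℕ)
  | unit
  | rcd (us : List UVal)
  | ptr (p : Ptr)

/-- Value-semantics values: literals, unit, and records. -/
inductive VVal
  | lit (n : ℕ)
  | unit
  | rcd (vs : List VVal)

/-- Mutable stores: partial maps from pointers to update-semantics values. -/
abbrev Store := Ptr → Option UVal

mutual
/-- The correspondence relation `u | μ : v : τ [ro: r, rw: w]` between an
    update-semantics value (with store) and a value-semantics value at type τ,
    collecting read-only pointers r and writable pointers w reachable from u. -/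
inductive Corr : UVal → Store → VVal → Ty → Set Ptr → Set Ptr → Prop
  | lit : Corr (.lit n) μ (.lit n) .prim ∅ ∅
  | unit : Corr .unit μ .unit .unit ∅ ∅
  | recU : CorrFields us μ vs fs r w →
      Corr (.rcd us) μ (.rcd vs) (.record fs .unboxed) r w
  | recW : μ p = some (.rcd us) → CorrFields us μ vs fs r w →
      Corr (.ptr p) μ (.rcd vs) (.record fs .writable) r ({p} ∪ w)
  | recR : μ p = some (.rcd us) → CorrFields us μ vs fs r ∅ →
      Corr (.ptr p) μ (.rcd vs) (.record fs .readOnly) ({p} ∪ r) ∅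

/-- Field-wise correspondence, with non-aliasing of writable pointers;
    taken fields are skipped. -/
inductive CorrFields : List UVal → Store → List VVal → List (Ty × Bool) → Set Ptr → Set Ptr → Prop
  | nil : CorrFields [] μ [] [] ∅ ∅
  | cons : Corr u μ v τ r w → CorrFields us μ vs fs r' w' →
      w ∩ (r' ∪ w') = ∅ → w' ∩ (r ∪ w) = ∅ →
      CorrFields (u :: us) μ (v :: vs) ((τ, false) :: fs) (r ∪ r') (w ∪ w')
  | taken : CorrFields us μ vs fs r w →
      CorrFields (u :: us) μ (v :: vs) ((τ, true) :: fs) r w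
end

/-- Typing contexts (entries may be absent). -/
abbrev Ctx := List (Option Ty)

/-- Environment correspondence `U | μ : V : Γ [ro: r, rw: w]`, with
    non-aliasing of writable pointers between distinct bindings. -/
inductive EnvCorr : List UVal → Store → List VVal → Ctx → Set Ptr → Set Ptr → Prop
  | nil : EnvCorr [] μ [] [] ∅ ∅
  | consSome : Corr u μ v τ r w → EnvCorr U μ V Γ r' w' →
      w ∩ (r' ∪ w') = ∅ → w' ∩ (r ∪ w) = ∅ →
      EnvCorr (u :: U) μ (v :: V) (some τ :: Γ) (r ∪ r') (w ∪ w')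
  | consNone : EnvCorr U μ V Γ r w →
      EnvCorr (u :: U) μ (v :: V) (none :: Γ) r w

/-- Context splitting: bindings duplicated into both output contexts must have
    a shareable type (a kind containing S). -/
inductive Split : Ctx → Ctx → Ctx → Prop
  | nil : Split [] [] []
  | none : Split Γ Γ₁ Γ₂ → Split (none :: Γ) (none :: Γ₁) (none :: Γ₂)
  | left : Split Γ Γ₁ Γ₂ → Split (some τ :: Γ) (some τ :: Γ₁) (none :: Γ₂)
  | right : Split Γ Γ₁ Γ₂ → Split (some τ :: Γ) (none :: Γ₁) (some τ :: Γ₂)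
  | both : Kinding τ κ → Perm.S ∈ κ → Split Γ Γ₁ Γ₂ →
      Split (some τ :: Γ) (some τ :: Γ₁) (some τ :: Γ₂)

/-!
Induction on the splitting. A binding sent to one side only contributes its pointers to that
side. A binding sent to both sides has shareable type, hence no writable pointers, so its
read-only pointers can be duplicated while the writable pointers of the two sides stay disjoint.
-/

mutual
theorem Corr.writable_eq_empty_of_shareable {u : UVal} {μ : Store} {v : VVal} {τ : Ty}
    {r w : Set Ptr} {κ : Kind} :
    Corr u μ v τ r w → Kinding τ κ → Perm.S ∈ κ → w = ∅
  | .lit, _, _ | .unit, _, _ | .recR _ _, _, _ => rfl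
  | .recU hf, .record _ hk, hS => hf.writable_eq_empty_of_shareable hk hS
  | .recW _ _, .record hκ _, hS => absurd (hκ hS) (by simp [kindOf])

theorem CorrFields.writable_eq_empty_of_shareable {us : List UVal} {μ : Store} {vs : List VVal}
    {fs : List (Ty × Bool)} {r w : Set Ptr} {κ : Kind} :
    CorrFields us μ vs fs r w → (∀ p ∈ fs, p.2 = false → Kinding p.1 κ) → Perm.S ∈ κ → w = ∅
  | .nil, _, _ => rfl
  | .cons hc hf _ _, hk, hS => by
    rw [hc.writable_eq_empty_of_shareable (hk _ List.mem_cons_self rfl) hS,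
      hf.writable_eq_empty_of_shareable (fun p hp => hk p (List.mem_cons_of_mem _ hp)) hS,
      Set.union_empty]
  | .taken hf, hk, hS =>
    hf.writable_eq_empty_of_shareable (fun p hp => hk p (List.mem_cons_of_mem _ hp)) hS
end

def EnvSplit (U : List UVal) (μ : Store) (V : List VVal) (Γ₁ Γ₂ : Ctx) (r w : Set Ptr) : Prop :=
  ∃ r₁ r₂ w₁ w₂ : Set Ptr, r = r₁ ∪ r₂ ∧ w = w₁ ∪ w₂ ∧ w₁ ∩ w₂ = ∅ ∧
    EnvCorr U μ V Γ₁ r₁ w₁ ∧ EnvCorr U μ V Γ₂ r₂ w₂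

namespace EnvSplit

variable {u : UVal} {U : List UVal} {μ : Store} {v : VVal} {V : List VVal} {τ : Ty}
  {Γ₁ Γ₂ : Ctx} {r w r' w' : Set Ptr}

theorem nil : EnvSplit [] μ [] [] [] ∅ ∅ :=
  ⟨∅, ∅, ∅, ∅, by simp, by simp, by simp, .nil, .nil⟩

theorem symm (h : EnvSplit U μ V Γ₁ Γ₂ r w) : EnvSplit U μ V Γ₂ Γ₁ r w := by
  obtain ⟨r₁, r₂, w₁, w₂, rfl, rfl, hd, h₁, h₂⟩ := h
  exact ⟨r₂, r₁, w₂, w₁, Set.union_comm .., Set.union_comm .., Set.inter_comm .. ▸ hd, h₂, h₁⟩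

theorem consNone (h : EnvSplit U μ V Γ₁ Γ₂ r w) :
    EnvSplit (u :: U) μ (v :: V) (none :: Γ₁) (none :: Γ₂) r w := by
  obtain ⟨r₁, r₂, w₁, w₂, hr, hw, hd, h₁, h₂⟩ := h
  exact ⟨r₁, r₂, w₁, w₂, hr, hw, hd, .consNone h₁, .consNone h₂⟩

theorem consSome_left (h : EnvSplit U μ V Γ₁ Γ₂ r' w') (hc : Corr u μ v τ r w)
    (hd : w ∩ (r' ∪ w') = ∅) (hd' : w' ∩ (r ∪ w) = ∅) :
    EnvSplit (u :: U) μ (v :: V) (some τ :: Γ₁) (none :: Γ₂) (r ∪ r') (w ∪ w') := by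
  obtain ⟨r₁, r₂, w₁, w₂, rfl, rfl, hd₁₂, h₁, h₂⟩ := h
  simp only [← Set.disjoint_iff_inter_eq_empty, Set.disjoint_union_left,
    Set.disjoint_union_right] at hd hd' hd₁₂
  refine ⟨r ∪ r₁, r₂, w ∪ w₁, w₂, (Set.union_assoc ..).symm, (Set.union_assoc ..).symm, ?_,
    .consSome hc h₁ ?_ ?_, .consNone h₂⟩ <;>
  simp only [← Set.disjoint_iff_inter_eq_empty, Set.disjoint_union_left,
    Set.disjoint_union_right] <;> tauto

theorem consSome_shared (h : EnvSplit U μ V Γ₁ Γ₂ r' w') (hc : Corr u μ v τ r ∅)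
    (hd' : w' ∩ r = ∅) :
    EnvSplit (u :: U) μ (v :: V) (some τ :: Γ₁) (some τ :: Γ₂) (r ∪ r') w' := by
  obtain ⟨r₁, r₂, w₁, w₂, rfl, rfl, hd₁₂, h₁, h₂⟩ := h
  rw [← Set.disjoint_iff_inter_eq_empty, Set.disjoint_union_left] at hd'
  refine ⟨r ∪ r₁, r ∪ r₂, w₁, w₂, Set.union_union_distrib_left .., rfl, hd₁₂,
    Set.empty_union w₁ ▸ .consSome hc h₁ (Set.empty_inter _) ?_,
    Set.empty_union w₂ ▸ .consSome hc h₂ (Set.empty_inter _) ?_⟩ <;>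
  rw [Set.union_empty, ← Set.disjoint_iff_inter_eq_empty]
  exacts [hd'.1, hd'.2]

end EnvSplit

/-- Context splitting respects environment typing. -/
theorem split_respects_envCorr {U : List UVal} {μ : Store} {V : List VVal}
    {Γ Γ₁ Γ₂ : Ctx} {r w : Set Ptr}
    (h : EnvCorr U μ V Γ r w) (hs : Split Γ Γ₁ Γ₂) :
    ∃ r₁ r₂ w₁ w₂ : Set Ptr, r = r₁ ∪ r₂ ∧ w = w₁ ∪ w₂ ∧ w₁ ∩ w₂ = ∅ ∧
      EnvCorr U μ V Γ₁ r₁ w₁ ∧ EnvCorr U μ V Γ₂ r₂ w₂ := by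
  show EnvSplit U μ V Γ₁ Γ₂ r w
  induction hs generalizing U V r w with
  | nil => cases h; exact .nil
  | none _ ih => cases h with | consNone h => exact (ih h).consNone
  | left _ ih => cases h with | consSome hc h hd hd' => exact (ih h).consSome_left hc hd hd'
  | right _ ih =>
    cases h with | consSome hc h hd hd' => exact ((ih h).symm.consSome_left hc hd hd').symm
  | both hk hS _ ih =>
    cases h with
    | consSome hc h _ hd' =>
      obtain rfl := hc.writable_eq_empty_of_shareable hk hS
      simpa using (ih h).consSome_shared hc (by simpa using hd')
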